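/- arXiv:cs/0512051 — 2 statements merged into one kernel-verified Lean document; each statement's English description precedes it below -/
import Mathlib

section
/- Let f be an L-uniform morphism (L ≥ 1) from A* to B* and k ≥ 3 an integer. Suppose u^k (u non-empty) is directly covered by f(w) for a word w with |w| ≥ k+1, i.e., f(w) = p0·u^k·sk with |p0| < L and |sk| < L. Then there exist words p_0,...,p_k, s_0,...,s_k, w_1,...,w_k and letters a_0,...,a_k such that: w = a_0 w_1 a_1 ... a_{k-1} w_k a_k; f(a_i) = p_i s_i for all 0 ≤ i ≤ k; s_0 ≠ ε; p_i ≠ ε for 1 ≤ i ≤ k; and u = s_{i-1} f(w_i) p_i for all 1 ≤ i ≤ k. -/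
/-- n-fold power of a word (list) under concatenation. -/
def wpow {α : Type*} (u : List α) (n : ℕ) : List α := (List.replicate n u).flatten

/-- A word is k-power-free if it contains no factor `u^k` with `u` non-empty. -/
def kPowerFree {α : Type*} (k : ℕ) (w : List α) : Prop :=
  ∀ u : List α, u ≠ [] → ¬ (wpow u k <:+: w)

/-- Extension of a letter map to a morphism of free monoids. -/
def applyMorph {α β : Type*} (g : α → List β) (w : List α) : List β := w.flatMap g

lemma applyMorph_append {α β : Type*} (g : α → List β) (x y : List α) :
    applyMorph g (x ++ y) = applyMorph g x ++ applyMorph g y := by simp [applyMorph]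

lemma applyMorph_cons {α β : Type*} (g : α → List β) (x : α) (l : List α) :
    applyMorph g (x :: l) = g x ++ applyMorph g l := by simp [applyMorph]

lemma applyMorph_singleton {α β : Type*} (g : α → List β) (x : α) :
    applyMorph g [x] = g x := by simp [applyMorph]

lemma applyMorph_length {α β : Type*} (g : α → List β) {L : ℕ}
    (hu : ∀ b, (g b).length = L) (w : List α) :
    (applyMorph g w).length = L * w.length := by
  induction w with
  | nil => simp [applyMorph]
  | cons x l ih =>
    rw [applyMorph_cons, List.length_append, ih, hu, List.length_cons]; ring

lemma wpow_add {α : Type*} (u : List α) (m n : ℕ) :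
    wpow u (m + n) = wpow u m ++ wpow u n := by
  unfold wpow
  rw [List.replicate_add, List.flatten_append]

lemma wpow_one {α : Type*} (u : List α) : wpow u 1 = u := by simp [wpow]

lemma length_wpow {α : Type*} (u : List α) (n : ℕ) :
    (wpow u n).length = n * u.length := by
  induction n with
  | zero => simp [wpow]
  | succ n ih =>
    rw [wpow_add, List.length_append, ih, wpow_one]; ring

lemma middle_eq {α : Type*} {X1 Y1 Z1 X2 Y2 Z2 : List α}
    (h : X1 ++ Y1 ++ Z1 = X2 ++ Y2 ++ Z2)
    (hx : X1.length = X2.length) (hy : Y1.length = Y2.length) : Y1 = Y2 := by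
  have h' : X1 ++ (Y1 ++ Z1) = X2 ++ (Y2 ++ Z2) := by simpa [List.append_assoc] using h
  obtain ⟨-, h2⟩ := List.append_inj h' hx
  exact (List.append_inj h2 hy).1

lemma take_succ_getElem {α : Type*} (w : List α) (q : ℕ) (h : q < w.length) :
    w.take (q+1) = w.take q ++ [w[q]'h] := by
  rw [List.take_succ, List.getElem?_eq_getElem h]
  rfl

lemma take_split {α : Type*} (w : List α) (q q' : ℕ) (hqq : q < q') (hq' : q' ≤ w.length) :
    w.take q' = (w.take q ++ [w[q]'(by omega)]) ++ (w.take q').drop (q + 1) := by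
  have h1 : (w.take q').take (q+1) = w.take (q+1) := by
    rw [List.take_take]; congr 1; omega
  conv_lhs => rw [← List.take_append_drop (q+1) (w.take q')]
  rw [h1, take_succ_getElem w q (by omega)]

lemma full_split {α : Type*} (w : List α) (q q' : ℕ) (hqq : q < q') (hq' : q' < w.length) :
    w = w.take q ++ [w[q]'(by omega)] ++ (w.take q').drop (q + 1)
        ++ [w[q']'hq'] ++ w.drop (q' + 1) := by
  conv_lhs => rw [← List.take_append_drop q' w, List.drop_eq_getElem_cons hq',
    take_split w q q' hqq (le_of_lt hq')]
  simp

theorem decomposition_exists {α β : Type*} (g : α → List β) (L k : ℕ)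
    (hL : 1 ≤ L) (hk : 3 ≤ k)
    (huniform : ∀ b : α, (g b).length = L)
    (u : List β) (hu : u ≠ []) (w : List α) (hw : k + 1 ≤ w.length)
    (P S : List β) (hcov : applyMorph g w = P ++ wpow u k ++ S)
    (hP : P.length < L) (hS : S.length < L) :
    ∃ (p s : ℕ → List β) (a : ℕ → α) (ws : ℕ → List α),
      w = [a 0] ++ (List.range k).flatMap (fun i => ws (i+1) ++ [a (i+1)]) ∧
      (∀ i ≤ k, g (a i) = p i ++ s i) ∧
      s 0 ≠ [] ∧
      (∀ i, 1 ≤ i → i ≤ k → p i ≠ []) ∧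
      (∀ i, 1 ≤ i → i ≤ k → u = s (i-1) ++ applyMorph g (ws i) ++ p i) := by
  have hWpos : 0 < w.length := by omega
  have hU : 1 ≤ u.length := List.length_pos_iff.mpr hu
  obtain ⟨W, hWdef⟩ : ∃ W, w.length = W := ⟨_, rfl⟩
  obtain ⟨U, hUdef⟩ : ∃ U, u.length = U := ⟨_, rfl⟩
  rw [hWdef] at hw hWpos
  rw [hUdef] at hU
  -- total length equation
  have htot : L * W = P.length + k * U + S.length := by
    have h := congrArg List.length hcov
    rw [applyMorph_length g huniform, List.length_append, List.length_append,
      length_wpow, hWdef, hUdef] at h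
    omega
  -- boundary letter indices
  obtain ⟨E, hEdef⟩ : ∃ E : ℕ → ℕ,
      E = fun i => if i = 0 then 0 else (P.length + i * U - 1) / L := ⟨_, rfl⟩
  have hE0 : E 0 = 0 := by simp [hEdef]
  have hEpos : ∀ i, 1 ≤ i → E i = (P.length + i * U - 1) / L := by
    intro i hi; rw [hEdef]; simp only; rw [if_neg (by omega)]
  have hxpos : ∀ i, 1 ≤ i → 1 ≤ P.length + i * U := by
    intro i hi
    have : 1 * 1 ≤ i * U := Nat.mul_le_mul hi hU
    omega
  have hdiv : ∀ i, 1 ≤ i → L * E i < P.length + i * U ∧ P.length + i * U ≤ L * E i + L := by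
    intro i hi
    rw [hEpos i hi]
    have h1 : ((P.length + i*U - 1)/L) * L ≤ P.length + i*U - 1 := Nat.div_mul_le_self _ _
    have h2 : P.length + i*U - 1 < ((P.length + i*U - 1)/L + 1) * L :=
      (Nat.div_lt_iff_lt_mul (by omega)).mp (Nat.lt_succ_self _)
    have h3 : ((P.length + i*U - 1)/L) * L = L * ((P.length + i*U - 1)/L) := Nat.mul_comm _ _
    have h4 : ((P.length + i*U - 1)/L + 1) * L = ((P.length + i*U - 1)/L) * L + L := by ring
    have h5 := hxpos i hi
    omega
  have hEk : E k = W - 1 := by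
    rw [hEpos k (by omega)]
    have h5 := hxpos k (by omega)
    apply Nat.div_eq_of_lt_le
    · have h : (W-1)*L + L = W * L := by
        have h' : W - 1 + 1 = W := by omega
        calc (W-1)*L + L = ((W-1)+1) * L := by ring
        _ = W * L := by rw [h']
      have h2 : W * L = L * W := Nat.mul_comm _ _
      omega
    · have h2 : (W - 1 + 1) * L = W * L := by rw [show W - 1 + 1 = W by omega]
      have h3 : W * L = L * W := Nat.mul_comm _ _
      omega
  have hmono1 : ∀ i, E i ≤ E (i+1) := by
    intro i
    rcases Nat.eq_zero_or_pos i with h | h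
    · subst h; rw [hE0]; exact Nat.zero_le _
    · rw [hEpos i h, hEpos (i+1) (by omega)]
      apply Nat.div_le_div_right
      have : (i+1) * U = i * U + U := by ring
      omega
  have hstep : ∀ i, i < k → E i + 1 ≤ E (i+1) := by
    by_cases hcase : L + 1 ≤ U
    · intro i _
      rcases Nat.eq_zero_or_pos i with h | h
      · subst h; rw [hE0, hEpos 1 le_rfl]
        have : 1 ≤ (P.length + 1*U - 1)/L := by
          rw [Nat.le_div_iff_mul_le (show 0 < L by omega)]
          omega
        omega
      · rw [hEpos i h, hEpos (i+1) (by omega)]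
        have h5 : (P.length + i*U - 1) / L + 1 = (P.length + i*U - 1 + L) / L :=
          (Nat.add_div_right _ (show 0 < L by omega)).symm
        rw [h5]
        apply Nat.div_le_div_right
        have h6 : (i+1) * U = i * U + U := by ring
        have h7 := hxpos i h
        omega
    · push_neg at hcase
      have hinc : ∀ i, E (i+1) ≤ E i + 1 := by
        intro i
        rcases Nat.eq_zero_or_pos i with h | h
        · subst h; rw [hE0, hEpos 1 le_rfl]
          have : (P.length + 1*U - 1)/L < 2 := by
            rw [Nat.div_lt_iff_lt_mul (show 0 < L by omega)]
            omega
          omega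
        · rw [hEpos i h, hEpos (i+1) (by omega)]
          have h5 : (P.length + i*U - 1) / L + 1 = (P.length + i*U - 1 + L) / L :=
            (Nat.add_div_right _ (show 0 < L by omega)).symm
          rw [h5]
          apply Nat.div_le_div_right
          have h6 : (i+1) * U = i * U + U := by ring
          have h7 := hxpos i h
          omega
      have hlin : ∀ b a, E (a + b) ≤ E a + b := by
        intro b
        induction b with
        | zero => intro a; simp
        | succ b ih =>
          intro a
          have h1 : a + (b+1) = (a + b) + 1 := by omega
          rw [h1]
          have h2 := hinc (a + b)
          have h3 := ih a
          omega
      intro i hi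
      by_contra hcon
      push_neg at hcon
      have h1 : E k ≤ E (i+1) + (k - (i+1)) := by
        have := hlin (k - (i+1)) (i+1)
        rwa [show (i+1) + (k - (i+1)) = k by omega] at this
      have h2 : E i ≤ i := by
        have := hlin i 0
        rwa [hE0, Nat.zero_add] at this
      omega
  have hEle : ∀ i, i ≤ k → E i ≤ W - 1 := by
    intro i hik
    have key : ∀ j, E i ≤ E (i + j) := by
      intro j; induction j with
      | zero => simp
      | succ j ih =>
        have h : i + (j+1) = (i+j) + 1 := by omega
        rw [h]
        exact le_trans ih (hmono1 _)
    have := key (k - i)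
    rwa [show i + (k-i) = k by omega, hEk] at this
  have hElt : ∀ i, i ≤ k → E i < W := by intro i h; have := hEle i h; omega
  -- definitions of the pieces
  -- definitions of the pieces
  obtain ⟨a, hadef⟩ : ∃ a : ℕ → α, a = fun i => w.getD (E i) (w[0]'(by omega)) := ⟨_, rfl⟩
  obtain ⟨r, hrdef⟩ : ∃ r : ℕ → ℕ, r = fun i => P.length + i * U - L * E i := ⟨_, rfl⟩
  obtain ⟨p, hpdef⟩ : ∃ p : ℕ → List β, p = fun i => (g (a i)).take (r i) := ⟨_, rfl⟩
  obtain ⟨s, hsdef⟩ : ∃ s : ℕ → List β, s = fun i => (g (a i)).drop (r i) := ⟨_, rfl⟩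
  obtain ⟨ws, hwsdef⟩ : ∃ ws : ℕ → List α,
      ws = fun i => (w.take (E i)).drop (E (i-1) + 1) := ⟨_, rfl⟩
  have ha : ∀ (i : ℕ) (h : E i < W), a i = w[E i]'(by omega) := by
    intro i h
    rw [hadef]
    exact List.getD_eq_getElem w _ (by omega)
  have hr0 : r 0 = P.length := by rw [hrdef]; simp [hE0]
  have hrb : ∀ i, 1 ≤ i → 1 ≤ r i ∧ r i ≤ L ∧ L * E i + r i = P.length + i * U := by
    intro i hi
    have h := hdiv i hi
    rw [hrdef]
    simp only
    omega
  have hrL : ∀ i, r i ≤ L := by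
    intro i
    rcases Nat.eq_zero_or_pos i with h | h
    · subst h; omega
    · exact (hrb i h).2.1
  have hps : ∀ i, g (a i) = p i ++ s i := by
    intro i; rw [hpdef, hsdef]; exact (List.take_append_drop _ _).symm
  have hplen : ∀ i, (p i).length = r i := by
    intro i
    rw [hpdef]
    simp only [List.length_take, huniform]
    have := hrL i
    omega
  have hslen : ∀ i, (s i).length = L - r i := by
    intro i
    rw [hsdef]
    simp only [List.length_drop, huniform]
  have hLE : ∀ j, L * E j + r j = P.length + j * U := by
    intro j
    rcases Nat.eq_zero_or_pos j with h | h
    · subst h; rw [hE0, hr0]; simp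
    · exact (hrb j h).2.2
  -- the middle extraction (conjunct 5)
  have hmid : ∀ i, 1 ≤ i → i ≤ k → u = s (i-1) ++ applyMorph g (ws i) ++ p i := by
    intro i h1 h2
    obtain ⟨j, rfl⟩ : ∃ j, i = j + 1 := ⟨i - 1, by omega⟩
    simp only [Nat.add_sub_cancel]
    have hq : E j + 1 ≤ E (j+1) := hstep j (by omega)
    have hq'W : E (j+1) < W := hElt (j+1) h2
    have hq'w : E (j+1) < w.length := by omega
    have hqw : E j < w.length := by omega
    have hsplit := full_split w (E j) (E (j+1)) (by omega) hq'w
    have haj : a j = w[E j]'hqw := ha j (by omega)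
    have haj1 : a (j+1) = w[E (j+1)]'hq'w := ha (j+1) (by omega)
    have hwseq : ws (j+1) = (w.take (E (j+1))).drop (E j + 1) := by
      rw [hwsdef]; simp only [Nat.add_sub_cancel]
    have hgj : g (w[E j]'hqw) = p j ++ s j := by rw [← haj]; exact hps j
    have hgj1 : g (w[E (j+1)]'hq'w) = p (j+1) ++ s (j+1) := by rw [← haj1]; exact hps (j+1)
    have hF1 : applyMorph g w =
        (applyMorph g (w.take (E j)) ++ p j) ++
        (s j ++ applyMorph g (ws (j+1)) ++ p (j+1)) ++
        (s (j+1) ++ applyMorph g (w.drop (E (j+1) + 1))) := by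
      conv_lhs => rw [hsplit]
      rw [applyMorph_append, applyMorph_append, applyMorph_append, applyMorph_append,
        applyMorph_singleton, applyMorph_singleton, hgj, hgj1, hwseq]
      simp [List.append_assoc]
    have hF2 : applyMorph g w = (P ++ wpow u j) ++ u ++ (wpow u (k - (j+1)) ++ S) := by
      have hwk : wpow u k = wpow u j ++ (u ++ wpow u (k - (j+1))) := by
        conv_lhs => rw [show k = j + (1 + (k - (j+1))) from by omega]
        rw [wpow_add, wpow_add, wpow_one]
      rw [hcov, hwk]
      simp [List.append_assoc]
    have hEjw : E j ≤ w.length := by omega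
    have hlen1 : (applyMorph g (w.take (E j)) ++ p j).length = (P ++ wpow u j).length := by
      rw [List.length_append, List.length_append, applyMorph_length g huniform,
        List.length_take, length_wpow, hplen j, hUdef]
      have hmin : min (E j) w.length = E j := by omega
      rw [hmin]
      exact hLE j
    have hlen2 : (s j ++ applyMorph g (ws (j+1)) ++ p (j+1)).length = u.length := by
      rw [List.length_append, List.length_append, applyMorph_length g huniform,
        hslen j, hplen (j+1), hwseq, List.length_drop, List.length_take, hUdef]
      have hmin : min (E (j+1)) w.length = E (j+1) := by omega
      rw [hmin]
      have hbig : L * E (j+1) = L * E j + L * (E (j+1) - (E j + 1)) + L := by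
        have h' : E (j+1) = E j + (E (j+1) - (E j + 1)) + 1 := by omega
        calc L * E (j+1) = L * (E j + (E (j+1) - (E j + 1)) + 1) := by rw [← h']
        _ = L * E j + L * (E (j+1) - (E j + 1)) + L := by ring
      have hb1 := hLE (j+1)
      have hb2 := hLE j
      have hb3 := hrL j
      have hb4 := hrL (j+1)
      have hbU : (j+1) * U = j * U + U := by ring
      omega
    have hres := middle_eq (hF1.symm.trans hF2) hlen1 hlen2
    exact hres.symm
  -- the telescoping decomposition (conjunct 1)
  have hkey : ∀ j, j ≤ k →
      w.take (E j + 1) = [a 0] ++ (List.range j).flatMap (fun i => ws (i+1) ++ [a (i+1)]) := by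
    intro j
    induction j with
    | zero =>
      intro _
      rw [hE0]
      have h1 := take_succ_getElem w 0 (by omega)
      simp only [List.take_zero, List.nil_append] at h1
      have h2 := ha 0 (by omega)
      simp only [hE0] at h2
      rw [h1, List.range_zero, List.flatMap_nil, List.append_nil, h2]
    | succ j ih =>
      intro hj
      have hjk : j ≤ k := by omega
      have hq : E j + 1 ≤ E (j+1) := hstep j (by omega)
      have hq'W : E (j+1) < W := hElt (j+1) hj
      have hq'w : E (j+1) < w.length := by omega
      have haj1 : a (j+1) = w[E (j+1)]'hq'w := ha (j+1) (by omega)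
      have hwseq : ws (j+1) = (w.take (E (j+1))).drop (E j + 1) := by
        rw [hwsdef]; simp only [Nat.add_sub_cancel]
      have h1 : (w.take (E (j+1))).take (E j + 1) = w.take (E j + 1) := by
        rw [List.take_take]; congr 1; omega
      have h2 : w.take (E (j+1)) = w.take (E j + 1) ++ ws (j+1) := by
        rw [hwseq]
        conv_lhs => rw [← List.take_append_drop (E j + 1) (w.take (E (j+1)))]
        rw [h1]
      rw [List.range_succ, List.flatMap_append,
        take_succ_getElem w (E (j+1)) hq'w, h2, ih hjk, ← haj1]
      simp [List.append_assoc]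
  have hconj1 : w = [a 0] ++ (List.range k).flatMap (fun i => ws (i+1) ++ [a (i+1)]) := by
    have h := hkey k le_rfl
    rw [hEk, show W - 1 + 1 = W from by omega, ← hWdef, List.take_length] at h
    exact h
  refine ⟨p, s, a, ws, hconj1, fun i _ => hps i, ?_, ?_, hmid⟩
  · -- s 0 ≠ []
    have hs0 : (s 0).length = L - P.length := by rw [hslen 0, hr0]
    exact List.length_pos_iff.mp (by omega)
  · -- p i ≠ [] for 1 ≤ i ≤ k
    intro i hi _
    have h1 := (hrb i hi).1
    have h2 := hplen i
    exact List.length_pos_iff.mp (by omega)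
end

section
/- Let f be an L-uniform morphism, k ≥ 3, and suppose there exist words p_0,...,p_k, s_0,...,s_k, w_1,...,w_k and letters a_0,...,a_k with: w = a_0 w_1 a_1 ... a_{k-1} w_k a_k, f(a_i) = p_i s_i for all i, s_0 ≠ ε, p_i ≠ ε for 1 ≤ i ≤ k, and u = s_{i-1} f(w_i) p_i for all 1 ≤ i ≤ k (with u non-empty). Then |w| ≥ k+1 and u^k is directly covered by f(w), i.e., f(w) = p_0 u^k s_k with |p_0| < L and |s_k| < L. -/
lemma wpow_succ' {α : Type*} (u : List α) (n : ℕ) :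
    wpow u (n+1) = wpow u n ++ u := by
  simp [wpow, List.replicate_succ']

theorem decomposition_covers {α β : Type*} (g : α → List β) (L k : ℕ)
    (hk : 3 ≤ k)
    (huniform : ∀ b : α, (g b).length = L)
    (u : List β) (hu : u ≠ []) (w : List α)
    (p s : ℕ → List β) (a : ℕ → α) (ws : ℕ → List α)
    (hw : w = [a 0] ++ (List.range k).flatMap (fun i => ws (i+1) ++ [a (i+1)]))
    (him : ∀ i ≤ k, g (a i) = p i ++ s i)
    (hs0 : s 0 ≠ [])
    (hp : ∀ i, 1 ≤ i → i ≤ k → p i ≠ [])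
    (hu' : ∀ i, 1 ≤ i → i ≤ k → u = s (i-1) ++ applyMorph g (ws i) ++ p i) :
    k + 1 ≤ w.length ∧
    applyMorph g w = p 0 ++ wpow u k ++ s k ∧
    (p 0).length < L ∧ (s k).length < L := by
  have key : ∀ n ≤ k,
      s 0 ++ applyMorph g ((List.range n).flatMap (fun i => ws (i+1) ++ [a (i+1)]))
        = wpow u n ++ s n := by
    intro n hn
    induction n with
    | zero => simp [wpow, applyMorph]
    | succ m ih =>
      have hm : m ≤ k := Nat.le_of_succ_le hn
      rw [List.range_succ, List.flatMap_append]
      have : applyMorph g ((List.range (m+1)).flatMap (fun i => ws (i+1) ++ [a (i+1)]))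
          = applyMorph g ((List.range m).flatMap (fun i => ws (i+1) ++ [a (i+1)]))
            ++ (applyMorph g (ws (m+1)) ++ g (a (m+1))) := by
        simp [applyMorph, List.range_succ]
      calc s 0 ++ ((List.range m).flatMap (fun i => ws (i+1) ++ [a (i+1)])
              ++ [m].flatMap (fun i => ws (i+1) ++ [a (i+1)])).flatMap g
          = (s 0 ++ applyMorph g ((List.range m).flatMap (fun i => ws (i+1) ++ [a (i+1)])))
              ++ (applyMorph g (ws (m+1)) ++ g (a (m+1))) := by
            simp [applyMorph, List.append_assoc]
        _ = wpow u m ++ s m ++ (applyMorph g (ws (m+1)) ++ (p (m+1) ++ s (m+1))) := by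
            rw [ih hm, him (m+1) hn]
        _ = wpow u m ++ (s m ++ applyMorph g (ws (m+1)) ++ p (m+1)) ++ s (m+1) := by
            simp [List.append_assoc]
        _ = wpow u (m+1) ++ s (m+1) := by
            rw [wpow_succ']
            have := hu' (m+1) (Nat.le_add_left 1 m) hn
            simp at this
            simp [this, List.append_assoc]
  have hmain : applyMorph g w = p 0 ++ wpow u k ++ s k := by
    rw [hw]
    have : applyMorph g ([a 0] ++ (List.range k).flatMap (fun i => ws (i+1) ++ [a (i+1)]))
        = g (a 0) ++ applyMorph g ((List.range k).flatMap (fun i => ws (i+1) ++ [a (i+1)])) := by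
      simp [applyMorph]
    rw [this, him 0 (by omega), List.append_assoc, key k le_rfl, List.append_assoc]
  have hlen : k + 1 ≤ w.length := by
    subst hw
    rw [List.length_append, List.length_singleton]
    have : ∀ n, n ≤ ((List.range n).flatMap (fun i => ws (i+1) ++ [a (i+1)])).length := by
      intro n
      induction n with
      | zero => simp
      | succ m ih =>
        rw [List.range_succ, List.flatMap_append]
        simp only [List.length_append]
        have : 1 ≤ ([m].flatMap (fun i => ws (i+1) ++ [a (i+1)])).length := by simp
        omega
    have := this k
    omega
  have hp0 : (p 0).length < L := by
    have h := him 0 (by omega)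
    have hl := huniform (a 0)
    rw [h, List.length_append] at hl
    have : 0 < (s 0).length := List.length_pos_iff.mpr hs0
    omega
  have hsk : (s k).length < L := by
    have h := him k le_rfl
    have hl := huniform (a k)
    rw [h, List.length_append] at hl
    have : 0 < (p k).length := List.length_pos_iff.mpr (hp k (by omega) le_rfl)
    omega
  exact ⟨hlen, hmain, hp0, hsk⟩
end
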